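/- Every non-identity morphism in the category Nec of necklaces is a composition of morphisms of the following three types: (i) injective necklace morphisms f: T → T' with dim(T') − dim(T) = 1; (ii) morphisms f = f_1 ∨ ⋯ ∨ f_k between necklaces Δ^{n_1} ∨ ⋯ ∨ Δ^{n_k} → Δ^{m_1} ∨ ⋯ ∨ Δ^{m_k} with the same number of beads such that for exactly one index p with n_p ≥ 2 the map f_p is a simplicial codegeneracy s^j: Δ^{n_p} → Δ^{n_p − 1} and all other f_i are identity maps of standard simplices; (iii) morphisms f: Δ^{n_1} ∨ ⋯ ∨ Δ^{n_k} → Δ^{n_1} ∨ ⋯ ∨ Δ^{n_{p−1}} ∨ Δ^{n_{p+1}} ∨ ⋯ ∨ Δ^{n_k} (k ≥ 2) which collapse the p-th bead Δ^{n_p} to the last vertex of Δ^{n_{p−1}} (equivalently the first vertex of Δ^{n_{p+1}}) and are injective on all other beads. -/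

import Mathlib

/-!  Necklaces, modeled skeletally: a necklace `Δ^{n_1} ∨ ⋯ ∨ Δ^{n_k}` (all `n_i ≥ 1`) is
recorded by its total number of vertices `N + 1` (so it sits inside `Δ^N`) together with the
set `J` of "joint" vertices (the wedge points together with the first and the last vertex);
the beads are the intervals between consecutive joints.  A morphism of necklaces is a
monotone vertex map preserving the first and last vertices and sending each bead into a
bead; this is exactly a simplicial map of the corresponding simplicial sets preserving the
first and the last vertex. -/

structure Necklace where
  N : ℕ
  pos : 0 < N
  J : Finset (Fin (N + 1))
  zero_mem : (0 : Fin (N + 1)) ∈ J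
  last_mem : Fin.last N ∈ J

namespace Necklace

/-- Number of beads. -/
def beads (T : Necklace) : ℕ := T.J.card - 1

/-- Dimension `n_1 + ⋯ + n_k − k` of a necklace. -/
def dim (T : Necklace) : ℕ := T.N + 1 - T.J.card

/-- `(a, b)` is a pair of consecutive joints, i.e. the pair of end vertices of a bead. -/
def IsBead (T : Necklace) (a b : Fin (T.N + 1)) : Prop :=
  a ∈ T.J ∧ b ∈ T.J ∧ a < b ∧ ∀ c ∈ T.J, c ≤ a ∨ b ≤ c

/-- Morphisms of necklaces: monotone vertex maps preserving first and last vertices and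
mapping every bead into a bead.  (Such data is the same thing as a map of simplicial sets
between the corresponding wedges of simplices preserving first and last vertices.) -/
structure Hom (T T' : Necklace) where
  f : Fin (T.N + 1) →o Fin (T'.N + 1)
  map_zero : f 0 = 0
  map_last : f (Fin.last T.N) = Fin.last T'.N
  map_bead : ∀ a b : Fin (T.N + 1), T.IsBead a b → ∃ a' b' : Fin (T'.N + 1),
      T'.IsBead a' b' ∧ ∀ v, a ≤ v → v ≤ b → a' ≤ f v ∧ f v ≤ b'

/-- The identity morphism of a necklace. -/
def Hom.id (T : Necklace) : Hom T T :=
  ⟨OrderHom.id, rfl, rfl, fun a b h => ⟨a, b, h, fun _ h1 h2 => ⟨h1, h2⟩⟩⟩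

/-- Composition of necklace morphisms. -/
def Hom.comp {T T' T'' : Necklace} (g : Hom T' T'') (φ : Hom T T') : Hom T T'' where
  f := g.f.comp φ.f
  map_zero := by
    show g.f (φ.f 0) = 0
    rw [φ.map_zero, g.map_zero]
  map_last := by
    show g.f (φ.f (Fin.last T.N)) = Fin.last T''.N
    rw [φ.map_last, g.map_last]
  map_bead := by
    intro a b h
    obtain ⟨a', b', h', hf⟩ := φ.map_bead a b h
    obtain ⟨a'', b'', h'', hg⟩ := g.map_bead a' b' h'
    exact ⟨a'', b'', h'', fun v h1 h2 =>
      hg (φ.f v) (hf v h1 h2).1 (hf v h1 h2).2⟩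

/-- Type (i): injective necklace morphisms raising the dimension by exactly one. -/
def TypeI {T T' : Necklace} (φ : Hom T T') : Prop :=
  Function.Injective φ.f ∧ T'.dim = T.dim + 1

/-- Type (ii): morphisms of the form `f_1 ∨ ⋯ ∨ f_k` between necklaces with the same number
of beads, where for exactly one `p` with `n_p ≥ 2` the map `f_p` is a simplicial
codegeneracy `s^j : Δ^{n_p} → Δ^{n_p − 1}` (i.e. exactly one pair of adjacent vertices,
lying in a bead of dimension `≥ 2`, is identified) and all the other `f_i` are identities. -/
def TypeII {T T' : Necklace} (φ : Hom T T') : Prop :=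
  T.beads = T'.beads ∧
  Function.Surjective φ.f ∧
  T'.J = T.J.image φ.f ∧
  ∃ v : Fin T.N,
    (φ.f v.castSucc = φ.f v.succ ∧
      ∃ a b : Fin (T.N + 1), T.IsBead a b ∧ a ≤ v.castSucc ∧ v.succ ≤ b ∧
        2 ≤ (b : ℕ) - (a : ℕ)) ∧
    ∀ w : Fin T.N, φ.f w.castSucc = φ.f w.succ → w = v

/-- Type (iii): morphisms collapsing the `p`-th bead to a vertex (which is the last vertex
of the `(p−1)`-st bead, equivalently the first vertex of the `(p+1)`-st bead of the target)
and injective on all the other beads; the domain is required to have at least two beads. -/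
def TypeIII {T T' : Necklace} (φ : Hom T T') : Prop :=
  2 ≤ T.beads ∧
  Function.Surjective φ.f ∧
  T'.J = T.J.image φ.f ∧
  ∃ a b : Fin (T.N + 1), T.IsBead a b ∧
    ∀ v w : Fin (T.N + 1), φ.f v = φ.f w ↔
      (v = w ∨ ((a ≤ v ∧ v ≤ b) ∧ (a ≤ w ∧ w ≤ b)))

/-- `IsCompositeOf P f` : the morphism `f` is a (nonempty) composite of morphisms each of
which satisfies the predicate `P`. -/
inductive IsCompositeOf (P : ∀ ⦃T T' : Necklace⦄, Hom T T' → Prop) :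
    ∀ ⦃T T' : Necklace⦄, Hom T T' → Prop
  | of {T T' : Necklace} (φ : Hom T T') : P φ → IsCompositeOf P φ
  | comp {T T' T'' : Necklace} (φ : Hom T T') (g : Hom T' T'') :
      P φ → IsCompositeOf P g → IsCompositeOf P (g.comp φ)

end Necklace

/-! A non-identity morphism `φ : T → T'` factors as `ψ ∘ ε` with `ε` elementary and `ψ` closer
to the identity, as measured by `Hom.defect`. If `φ` identifies two adjacent vertices, `ε`
collapses them: this is a codegeneracy on a bead of dimension `≥ 2` (type (ii)), or collapses a
bead of dimension one (type (iii)). If `φ` is injective but misses a vertex `w`, `ε` inserts a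
new vertex, sent to `w` by `ψ` (type (i)). Otherwise `φ` is bijective, hence the identity on
vertices, and since it is not the identity it sends some joint of `T` to a non-joint of `T'`;
then `ε` forgets that joint (type (i)). Induction on the defect concludes. -/

namespace Fin

theorem predAbove_eq_predAbove_iff {n : ℕ} (p : Fin n) (x y : Fin (n + 1)) :
    p.predAbove x = p.predAbove y ↔
      x = y ∨ (p.castSucc ≤ x ∧ x ≤ p.succ) ∧ (p.castSucc ≤ y ∧ y ≤ p.succ) := by
  simp only [predAbove, Fin.ext_iff, Fin.le_def, Fin.lt_def, val_castSucc, val_succ]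
  split_ifs <;> simp only [val_pred, coe_castPred] <;> omega

theorem exists_castSucc_lt_lt_succ {n : ℕ} {α : Type*} [LinearOrder α] {f : Fin (n + 1) → α}
    {x : α} (h0 : f 0 < x) (hx : x ∉ Set.range f) (hl : x < f (last n)) :
    ∃ i : Fin n, f i.castSucc < x ∧ x < f i.succ := by
  set S := Finset.univ.filter (x < f ·)
  have hS : S.Nonempty := ⟨last n, by simpa [S] using hl⟩
  have hmin : x < f (S.min' hS) := (Finset.mem_filter.1 (S.min'_mem hS)).2
  obtain ⟨i, hi⟩ := exists_succ_eq_of_ne_zero fun h : S.min' hS = 0 => (h ▸ hmin).not_gt h0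
  refine ⟨i, lt_of_le_of_ne (not_lt.1 fun h => ?_) fun h => hx ⟨_, h⟩, hi ▸ hmin⟩
  exact (S.min'_le _ (by simpa [S] using h)).not_gt (hi ▸ i.castSucc_lt_succ)

theorem exists_apply_castSucc_eq_apply_succ {n : ℕ} {α : Type*} [PartialOrder α]
    {f : Fin (n + 1) → α} (hf : Monotone f) (hinj : ¬ Function.Injective f) :
    ∃ i : Fin n, f i.castSucc = f i.succ := by
  by_contra! h
  exact hinj (strictMono_iff_lt_succ.2 fun i => (hf i.castSucc_le_succ).lt_of_ne (h i)).injective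

end Fin

namespace Necklace

open Finset Function

variable {T T' : Necklace}

theorem zero_lt_last (T : Necklace) : (0 : Fin (T.N + 1)) < Fin.last T.N :=
  Fin.lt_def.2 T.pos

theorem card_J_le (T : Necklace) : #T.J ≤ T.N + 1 := by
  simpa using T.J.card_le_univ

theorem two_le_card_J (T : Necklace) : 2 ≤ #T.J :=
  one_lt_card.2 ⟨0, T.zero_mem, _, T.last_mem, T.zero_lt_last.ne⟩

theorem exists_isBead (T : Necklace) {x y : Fin (T.N + 1)} (h : ∀ c ∈ T.J, c ≤ x ∨ y ≤ c) :
    ∃ a b, T.IsBead a b ∧ a ≤ x ∧ y ≤ b := by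
  -- `b` is the first joint `≥ y` other than `0`, and `a` the joint preceding it
  set B := T.J.filter fun c => y ≤ c ∧ 0 < c
  have hB : B.Nonempty := ⟨_, mem_filter.2 ⟨T.last_mem, Fin.le_last y, T.zero_lt_last⟩⟩
  obtain ⟨hbJ, hyb, hb0⟩ := mem_filter.1 (B.min'_mem hB)
  set A := T.J.filter (· < B.min' hB)
  have hA : A.Nonempty := ⟨0, mem_filter.2 ⟨T.zero_mem, hb0⟩⟩
  obtain ⟨haJ, hab⟩ := mem_filter.1 (A.max'_mem hA)
  refine ⟨A.max' hA, B.min' hB, ⟨haJ, hbJ, hab, fun c hc => ?_⟩, ?_, hyb⟩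
  · exact (lt_or_ge c _).imp (fun h => A.le_max' c (mem_filter.2 ⟨hc, h⟩)) id
  · rcases (Fin.zero_le (A.max' hA)).eq_or_lt with h0 | h0
    · exact h0 ▸ Fin.zero_le x
    · exact (h _ haJ).resolve_right fun hya =>
        (B.min'_le _ (mem_filter.2 ⟨haJ, hya, h0⟩)).not_gt hab

theorem Hom.ext {φ ψ : Hom T T'} (h : φ.f = ψ.f) : φ = ψ := by
  cases φ; cases ψ; cases h; rfl

theorem Hom.id_comp (φ : Hom T T') : (Hom.id T').comp φ = φ := rfl

theorem Hom.exists_mem_J_apply_eq (φ : Hom T T') {c' : Fin (T'.N + 1)} (hc' : c' ∈ T'.J) :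
    ∃ c ∈ T.J, φ.f c = c' := by
  set A := T.J.filter (φ.f · ≤ c')
  set B := T.J.filter (c' ≤ φ.f ·)
  have hA : A.Nonempty := ⟨0, mem_filter.2 ⟨T.zero_mem, φ.map_zero ▸ Fin.zero_le c'⟩⟩
  have hB : B.Nonempty := ⟨_, mem_filter.2 ⟨T.last_mem, φ.map_last ▸ Fin.le_last c'⟩⟩
  obtain ⟨haJ, ha⟩ := mem_filter.1 (A.max'_mem hA)
  obtain ⟨hbJ, hb⟩ := mem_filter.1 (B.min'_mem hB)
  by_cases ha' : φ.f (A.max' hA) = c'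
  · exact ⟨_, haJ, ha'⟩
  have hlt : φ.f (A.max' hA) < c' := lt_of_le_of_ne ha ha'
  have hab : A.max' hA ≤ B.min' hB := (φ.f.mono.reflect_lt (hlt.trans_le hb)).le
  obtain ⟨p, q, hpq, hp, hq⟩ := T.exists_isBead (x := A.max' hA) (y := B.min' hB) fun c hc =>
    (le_total (φ.f c) c').imp (fun h => A.le_max' c (mem_filter.2 ⟨hc, h⟩))
      (fun h => B.min'_le c (mem_filter.2 ⟨hc, h⟩))
  obtain ⟨p', q', hpq', hφ⟩ := φ.map_bead p q hpq
  -- the images of the two joints straddling `c'` lie in one bead, so `c'` is an end of it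
  refine ⟨_, hbJ, le_antisymm ?_ hb⟩
  rcases hpq'.2.2.2 c' hc' with h | h
  · exact absurd (h.trans (hφ _ hp (hab.trans hq)).1) (not_le.2 hlt)
  · exact (hφ _ (hp.trans hab) hq).2.trans h

/-- By `Hom.exists_mem_J_apply_eq`, these conditions characterise necklace morphisms. -/
def Hom.mk' (f : Fin (T.N + 1) →o Fin (T'.N + 1)) (h0 : f 0 = 0)
    (hl : f (Fin.last T.N) = Fin.last T'.N) (hJ : ∀ c' ∈ T'.J, ∃ c ∈ T.J, f c = c') :
    Hom T T' where
  f := f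
  map_zero := h0
  map_last := hl
  map_bead a b hab := by
    obtain ⟨a', b', h, ha, hb⟩ := T'.exists_isBead (x := f a) (y := f b) fun c' hc' => by
      obtain ⟨c, hc, rfl⟩ := hJ c' hc'
      exact (hab.2.2.2 c hc).imp (fun h => f.mono h) fun h => f.mono h
    exact ⟨a', b', h, fun v hav hvb => ⟨ha.trans (f.mono hav), (f.mono hvb).trans hb⟩⟩

abbrev Elementary (φ : Hom T T') : Prop :=
  TypeI φ ∨ TypeII φ ∨ TypeIII φ

def Hom.rank (φ : Hom T T') : ℕ := #(univ.image φ.f)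

theorem Hom.rank_eq_of_injective (φ : Hom T T') (hφ : Injective φ.f) : φ.rank = T.N + 1 := by
  simp [Hom.rank, card_image_of_injective _ hφ]

theorem Hom.rank_lt_of_not_injective (φ : Hom T T') (hφ : ¬ Injective φ.f) :
    φ.rank < T.N + 1 := by
  refine lt_of_le_of_ne (card_image_le.trans (by simp)) fun h => hφ ?_
  simpa [Set.injOn_univ] using card_image_iff.1 (h.trans (by simp))

theorem Hom.rank_lt_of_not_surjective (φ : Hom T T') (hφ : ¬ Surjective φ.f) :
    φ.rank < T'.N + 1 := by
  refine lt_of_le_of_ne ((card_le_univ _).trans (by simp)) fun h => hφ fun y => ?_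
  have hy : y ∈ univ.image φ.f := (card_eq_iff_eq_univ _).1 (h.trans (by simp)) ▸ mem_univ y
  simpa using hy

/-- The three summands measure how far `φ` is from being injective, from being surjective and
from mapping the joints of `T` onto those of `T'`. -/
def Hom.defect (φ : Hom T T') : ℕ :=
  (T.N + 1 - φ.rank) + (T'.N + 1 - φ.rank) + (#(T.J.image φ.f) - #T'.J)

def Hom.HasElementaryFirstFactor (φ : Hom T T') : Prop :=
  ∃ (T₁ : Necklace) (ε : Hom T T₁) (ψ : Hom T₁ T'),
    Elementary ε ∧ φ = ψ.comp ε ∧ ψ.defect < φ.defect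

theorem Hom.eq_id_of_bijective (φ : Hom T T') (hφ : Bijective φ.f)
    (hJ : T'.J = T.J.image φ.f) : ∃ _ : T = T', HEq φ (Hom.id T) := by
  obtain ⟨N, pos, J, h0, hl⟩ := T
  obtain ⟨N', pos', J', h0', hl'⟩ := T'
  obtain rfl : N = N' := by simpa using Fintype.card_congr (Equiv.ofBijective _ hφ)
  have hid : ⇑φ.f = _root_.id := congrArg DFunLike.coe (Subsingleton.elim
    (φ.f.mono.strictMono_of_injective hφ.1 |>.orderIsoOfSurjective _ hφ.2) (OrderIso.refl _))
  obtain rfl : J' = J := by simpa [hid] using hJ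
  exact ⟨rfl, heq_of_eq (Hom.ext (OrderHom.ext _ _ hid))⟩

section Pushforward

variable {n : ℕ} (hn : 0 < n) (f : Fin (T.N + 1) →o Fin (n + 1)) (h0 : f 0 = 0)
  (hl : f (Fin.last T.N) = Fin.last n)

def pushforward : Necklace :=
  ⟨n, hn, T.J.image f, mem_image.2 ⟨0, T.zero_mem, h0⟩, mem_image.2 ⟨_, T.last_mem, hl⟩⟩

def toPushforward : Hom T (pushforward hn f h0 hl) :=
  Hom.mk' f h0 hl fun _ => mem_image.1

variable {hn f h0 hl} (φ : Hom T T') (g : Fin (n + 1) →o Fin (T'.N + 1))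
  (hg : ∀ x, g (f x) = φ.f x)

def Hom.fromPushforward : Hom (pushforward hn f h0 hl) T' :=
  Hom.mk' g (show g 0 = 0 by rw [← h0, hg, φ.map_zero])
    (show g (Fin.last n) = _ by rw [← hl, hg, φ.map_last]) fun c' hc' => by
    obtain ⟨c, hc, rfl⟩ := φ.exists_mem_J_apply_eq hc'
    exact ⟨f c, mem_image_of_mem f hc, hg c⟩

theorem Hom.eq_fromPushforward_comp :
    φ = (φ.fromPushforward g hg).comp (toPushforward hn f h0 hl) :=
  Hom.ext (OrderHom.ext _ _ (funext fun x => (hg x).symm))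

theorem Hom.image_J_fromPushforward :
    (pushforward hn f h0 hl).J.image (φ.fromPushforward g hg).f = T.J.image φ.f := by
  simp only [pushforward, Finset.image_image]
  exact image_congr fun x _ => hg x

theorem Hom.rank_fromPushforward (hf : Surjective f) :
    (φ.fromPushforward (hn := hn) (h0 := h0) (hl := hl) g hg).rank = φ.rank := by
  show #(univ.image g) = #(univ.image φ.f)
  rw [← image_univ_of_surjective hf, image_image]
  exact congrArg card (image_congr fun x _ => hg x)

end Pushforward

section EraseJoint

variable (T) {j : Fin (T.N + 1)} (hj0 : j ≠ 0) (hjl : j ≠ Fin.last T.N)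

def eraseJoint : Necklace :=
  ⟨T.N, T.pos, T.J.erase j, mem_erase.2 ⟨hj0.symm, T.zero_mem⟩, mem_erase.2 ⟨hjl.symm, T.last_mem⟩⟩

def toEraseJoint : Hom T (T.eraseJoint hj0 hjl) :=
  Hom.mk' OrderHom.id rfl rfl fun c hc => ⟨c, mem_of_mem_erase hc, rfl⟩

theorem typeI_toEraseJoint (hj : j ∈ T.J) : TypeI (T.toEraseJoint hj0 hjl) := by
  refine ⟨injective_id, ?_⟩
  have := T.card_J_le
  have := T.two_le_card_J
  simp only [dim, eraseJoint, card_erase_of_mem hj]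
  omega

variable {T} (φ : Hom T T') (hφj : φ.f j ∉ T'.J)

def Hom.fromEraseJoint : Hom (T.eraseJoint hj0 hjl) T' :=
  Hom.mk' φ.f φ.map_zero φ.map_last fun c' hc' => by
    obtain ⟨c, hc, rfl⟩ := φ.exists_mem_J_apply_eq hc'
    exact ⟨c, mem_erase.2 ⟨fun h => hφj (h ▸ hc'), hc⟩, rfl⟩

end EraseJoint

theorem Hom.hasElementaryFirstFactor_of_J_ne (φ : Hom T T') (hφ : Injective φ.f)
    (hJ : T'.J ≠ T.J.image φ.f) : φ.HasElementaryFirstFactor := by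
  have hsub : T'.J ⊆ T.J.image φ.f := fun c' hc' => mem_image.2 (φ.exists_mem_J_apply_eq hc')
  obtain ⟨_, hjJ, hφj⟩ := exists_of_ssubset (hsub.ssubset_of_ne hJ)
  obtain ⟨j, hj, rfl⟩ := mem_image.1 hjJ
  have hj0 : j ≠ 0 := by rintro rfl; exact hφj (φ.map_zero ▸ T'.zero_mem)
  have hjl : j ≠ Fin.last T.N := by rintro rfl; exact hφj (φ.map_last ▸ T'.last_mem)
  refine ⟨_, T.toEraseJoint hj0 hjl, φ.fromEraseJoint hj0 hjl hφj,
    Or.inl (T.typeI_toEraseJoint hj0 hjl hj), Hom.ext rfl, ?_⟩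
  have hcard : #T'.J < #(T.J.image φ.f) := card_lt_card (hsub.ssubset_of_ne hJ)
  have herase : #((T.J.erase j).image φ.f) = #(T.J.image φ.f) - 1 := by
    rw [image_erase hφ, card_erase_of_mem hjJ]
  show (T.N + 1 - φ.rank) + (T'.N + 1 - φ.rank) + (#((T.J.erase j).image φ.f) - #T'.J) < _
  unfold Hom.defect
  omega

section InsertVertex

variable (T) (i : Fin T.N)

/-- The new vertex is inserted between `i.castSucc` and `i.succ`. -/
abbrev insertVertex : Necklace :=
  pushforward (by omega : 0 < T.N + 1) (Fin.succAboveOrderEmb i.castSucc.succ).toOrderHom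
    (Fin.succAbove_ne_zero_zero (a := i.castSucc.succ) (Fin.succ_ne_zero _))
    (Fin.succAbove_ne_last_last (Fin.ext_iff.not.2 (by
      rw [Fin.val_succ, Fin.val_castSucc, Fin.val_last]; omega)))

def toInsertVertex : Hom T (T.insertVertex i) := toPushforward ..

theorem typeI_toInsertVertex : TypeI (T.toInsertVertex i) := by
  have hinj : Injective (T.toInsertVertex i).f := Fin.succAbove_right_injective
  refine ⟨hinj, ?_⟩
  have := T.card_J_le
  show T.N + 1 + 1 - #(T.J.image (T.toInsertVertex i).f) = T.N + 1 - #T.J + 1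
  rw [card_image_of_injective _ hinj]
  omega

variable {T} (φ : Hom T T') {i} {w : Fin (T'.N + 1)} (h₁ : φ.f i.castSucc ≤ w)
  (h₂ : w ≤ φ.f i.succ)

def Hom.fromInsertVertex : Hom (T.insertVertex i) T' :=
  φ.fromPushforward ⟨Fin.insertNth _ w φ.f, Fin.insertNth_monotone φ.f.mono i w h₁ h₂⟩
    fun x => Fin.insertNth_apply_succAbove (α := fun _ => Fin (T'.N + 1)) _ w φ.f x

end InsertVertex

theorem Hom.hasElementaryFirstFactor_of_not_surjective (φ : Hom T T') (hinj : Injective φ.f)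
    (hsurj : ¬ Surjective φ.f) : φ.HasElementaryFirstFactor := by
  obtain ⟨w, hw⟩ := not_forall.1 hsurj
  have hw0 : φ.f 0 < w := φ.map_zero ▸ (Fin.zero_le w).lt_of_ne fun h => hw ⟨0, φ.map_zero.trans h⟩
  have hwl : w < φ.f (Fin.last T.N) :=
    φ.map_last ▸ (Fin.le_last w).lt_of_ne fun h => hw ⟨_, φ.map_last.trans h.symm⟩
  obtain ⟨i, h₁, h₂⟩ := Fin.exists_castSucc_lt_lt_succ hw0 hw hwl
  set ψ := φ.fromInsertVertex h₁.le h₂.le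
  refine ⟨_, T.toInsertVertex i, ψ, Or.inl (T.typeI_toInsertVertex i),
    φ.eq_fromPushforward_comp _ _, ?_⟩
  have hψ : ψ.rank = T.N + 1 + 1 := ψ.rank_eq_of_injective
    (Fin.strictMono_insertNth (φ.f.mono.strictMono_of_injective hinj) i w h₁ h₂).injective
  have hJ : #((T.insertVertex i).J.image ψ.f) = #(T.J.image φ.f) :=
    congrArg card (φ.image_J_fromPushforward _ _)
  have hφ := φ.rank_eq_of_injective hinj
  have hφ' := φ.rank_lt_of_not_surjective hsurj
  have hN : (T.insertVertex i).N = T.N + 1 := rfl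
  unfold Hom.defect
  rw [hψ, hJ, hN]
  omega

section Collapse

variable (T) (i : Fin T.N)

/-- `Fin.predAbove i`, identifying `i.castSucc` with `i.succ`, recast to the vertex type of a
necklace. -/
def collapseMap : Fin (T.N + 1) →o Fin (T.N - 1 + 1) :=
  (Fin.castOrderIso (Nat.sub_add_cancel T.pos).symm).toOrderEmbedding.toOrderHom.comp
    (Fin.predAboveOrderHom i)

theorem collapseMap_eq_collapseMap_iff {x y : Fin (T.N + 1)} :
    T.collapseMap i x = T.collapseMap i y ↔
      x = y ∨ (i.castSucc ≤ x ∧ x ≤ i.succ) ∧ (i.castSucc ≤ y ∧ y ≤ i.succ) := by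
  simp [collapseMap, Fin.predAbove_eq_predAbove_iff]

theorem collapseMap_surjective : Surjective (T.collapseMap i) :=
  (Fin.castOrderIso _).surjective.comp (Fin.predAbove_surjective i)

theorem collapseMap_zero : T.collapseMap i 0 = 0 := by
  ext; simp [collapseMap, Fin.predAbove]

theorem collapseMap_last : T.collapseMap i (Fin.last T.N) = Fin.last (T.N - 1) := by
  ext; simp [collapseMap, Fin.predAbove]

variable (h2 : 2 ≤ T.N)

abbrev collapse : Necklace :=
  pushforward (by omega : 0 < T.N - 1) (T.collapseMap i) (T.collapseMap_zero i)
    (T.collapseMap_last i)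

def toCollapse : Hom T (T.collapse i h2) := toPushforward ..

theorem typeII_toCollapse {a b : Fin (T.N + 1)} (hab : T.IsBead a b) (ha : a ≤ i.castSucc)
    (hb : i.succ ≤ b) (h : 2 ≤ (b : ℕ) - a) : TypeII (T.toCollapse i h2) := by
  refine ⟨?_, T.collapseMap_surjective i, rfl, i, ⟨?_, a, b, hab, ha, hb, h⟩, fun w hw => ?_⟩
  · -- `i.castSucc` and `i.succ` are not both joints, since the bead `[a, b]` is longer
    show #T.J - 1 = #(T.J.image (T.collapseMap i)) - 1
    rw [card_image_of_injOn fun x hx y hy hxy => ?_]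
    rcases (T.collapseMap_eq_collapseMap_iff i).1 hxy with hxy | ⟨⟨hx₁, hx₂⟩, hy₁, hy₂⟩
    · exact hxy
    have hx := hab.2.2.2 x hx
    have hy := hab.2.2.2 y hy
    simp only [Fin.le_def, Fin.val_castSucc, Fin.val_succ] at hx hy hx₁ hx₂ hy₁ hy₂ ha hb
    exact Fin.ext (by omega)
  · exact (T.collapseMap_eq_collapseMap_iff i).2
      (Or.inr ⟨⟨le_rfl, i.castSucc_le_succ⟩, i.castSucc_le_succ, le_rfl⟩)
  · obtain ⟨⟨h₁, -⟩, -, h₂⟩ :=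
      ((T.collapseMap_eq_collapseMap_iff i).1 hw).resolve_left w.castSucc_lt_succ.ne
    simp only [Fin.le_def, Fin.val_castSucc, Fin.val_succ] at h₁ h₂
    exact Fin.ext (by omega)

theorem typeIII_toCollapse (hi : T.IsBead i.castSucc i.succ) : TypeIII (T.toCollapse i h2) := by
  refine ⟨?_, T.collapseMap_surjective i, rfl, _, _, hi,
    fun _ _ => T.collapseMap_eq_collapseMap_iff i⟩
  suffices 2 < #T.J from Nat.le_sub_one_of_lt this
  -- as `T.N ≥ 2`, one of the ends of the bead is a third joint besides `0` and the last vertex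
  by_cases h0 : i.castSucc = 0
  · refine two_lt_card.2 ⟨0, T.zero_mem, i.succ, hi.2.1, _, T.last_mem, (Fin.succ_ne_zero i).symm,
      T.zero_lt_last.ne, Fin.ext_iff.not.2 ?_⟩
    simp only [Fin.ext_iff, Fin.val_castSucc, Fin.val_zero] at h0
    simp only [Fin.val_succ, Fin.val_last]
    omega
  · exact two_lt_card.2 ⟨0, T.zero_mem, i.castSucc, hi.1, _, T.last_mem, Ne.symm h0,
      T.zero_lt_last.ne, (Fin.castSucc_lt_last i).ne⟩

theorem elementary_toCollapse : Elementary (T.toCollapse i h2) := by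
  obtain ⟨a, b, hab, ha, hb⟩ := T.exists_isBead (x := i.castSucc) (y := i.succ) fun c _ =>
    (le_or_gt c i.castSucc).imp_right Fin.castSucc_lt_iff_succ_le.1
  by_cases h : 2 ≤ (b : ℕ) - a
  · exact Or.inr (Or.inl (T.typeII_toCollapse i h2 hab ha hb h))
  · have hlt := Fin.lt_def.1 hab.2.2.1
    simp only [Fin.le_def, Fin.val_castSucc, Fin.val_succ] at ha hb
    obtain rfl : a = i.castSucc := Fin.ext (by rw [Fin.val_castSucc]; omega)
    obtain rfl : b = i.succ := Fin.ext (by rw [Fin.val_succ]; omega)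
    exact Or.inr (Or.inr (T.typeIII_toCollapse i h2 hab))

variable {T} (φ : Hom T T') {i} (hφi : φ.f i.castSucc = φ.f i.succ)

def Hom.fromCollapse : Hom (T.collapse i h2) T' :=
  φ.fromPushforward (φ.f.comp ((Fin.succAboveOrderEmb i.castSucc).toOrderHom.comp
      (Fin.castOrderIso (Nat.sub_add_cancel T.pos)).toOrderEmbedding.toOrderHom)) fun x => by
    by_cases hx : x = i.castSucc
    · simp [collapseMap, hx, hφi]
    · simp [collapseMap, Fin.succAbove_predAbove hx]

end Collapse

theorem Hom.hasElementaryFirstFactor_of_not_injective (φ : Hom T T') (hφ : ¬ Injective φ.f) :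
    φ.HasElementaryFirstFactor := by
  obtain ⟨i, hi⟩ := Fin.exists_apply_castSucc_eq_apply_succ φ.f.mono hφ
  have h2 : 2 ≤ T.N := by
    by_contra! h
    -- otherwise `i.castSucc` and `i.succ` are the first and the last vertex
    have h0 : i.castSucc = 0 := Fin.ext (by rw [Fin.val_castSucc, Fin.val_zero]; omega)
    have hl : i.succ = Fin.last T.N := Fin.ext (by rw [Fin.val_succ, Fin.val_last]; omega)
    rw [h0, hl, φ.map_zero, φ.map_last] at hi
    exact T'.zero_lt_last.ne hi
  set ψ := φ.fromCollapse h2 hi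
  refine ⟨_, T.toCollapse i h2, ψ, T.elementary_toCollapse i h2,
    φ.eq_fromPushforward_comp _ _, ?_⟩
  have hψ : ψ.rank = φ.rank := φ.rank_fromPushforward _ _ (T.collapseMap_surjective i)
  have hJ : #((T.collapse i h2).J.image ψ.f) = #(T.J.image φ.f) :=
    congrArg card (φ.image_J_fromPushforward _ _)
  have hN : (T.collapse i h2).N = T.N - 1 := rfl
  have hφ' := φ.rank_lt_of_not_injective hφ
  unfold Hom.defect
  rw [hψ, hJ, hN]
  omega

theorem Hom.hasElementaryFirstFactor (φ : Hom T T') (hφ : ¬ ∃ _ : T = T', HEq φ (Hom.id T)) :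
    φ.HasElementaryFirstFactor := by
  by_cases hinj : Injective φ.f
  · by_cases hsurj : Surjective φ.f
    · by_cases hJ : T'.J = T.J.image φ.f
      · exact absurd (φ.eq_id_of_bijective ⟨hinj, hsurj⟩ hJ) hφ
      · exact φ.hasElementaryFirstFactor_of_J_ne hinj hJ
    · exact φ.hasElementaryFirstFactor_of_not_surjective hinj hsurj
  · exact φ.hasElementaryFirstFactor_of_not_injective hinj

end Necklace

open Necklace in
theorem nonidentity_necklace_morphism_is_composite_of_elementary
    (T T' : Necklace) (φ : Hom T T')
    (hφ : ¬ ∃ h : T = T', HEq φ (Hom.id T)) :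
    IsCompositeOf (fun _ _ g => TypeI g ∨ TypeII g ∨ TypeIII g) φ := by
  induction hd : φ.defect using Nat.strong_induction_on generalizing T T' with
  | _ n ih =>
    obtain ⟨T₁, ε, ψ, hε, rfl, hlt⟩ := φ.hasElementaryFirstFactor hφ
    by_cases hψ : ∃ _ : T₁ = T', HEq ψ (Hom.id T₁)
    · obtain ⟨rfl, hψ⟩ := hψ
      rw [eq_of_heq hψ, Hom.id_comp]
      exact .of ε hε
    · exact .comp ε ψ hε (ih _ (hd ▸ hlt) T₁ T' ψ hψ rfl)
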